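/- Discrete Gronwall inequality with weakly singular kernel: let α ∈ (0,1), τ > 0, t_j = jτ, and let (a_n)_{n≥0} be nonnegative reals satisfying a_n ≤ b + K τ Σ_{j=0}^{n} t_{n−j+1}^{α−1} a_j for all n ≤ N, where b ≥ 0, K ≥ 0 and K τ^α < 1. Then there exists a constant C depending only on α, K, and T₀ = Nτ such that a_n ≤ C b for all n ≤ N. -/

import Mathlib

/-!
Weighted-norm argument. The step sizes `τ = T₀ / N` decrease with `N`, so every admissible one
satisfies `K τ ^ α ≤ 1 - δ` with the `δ > 0` of the largest admissible step; this absorbs the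
diagonal term `j = n`.
Against the geometric weight `ρ ^ n`, `ρ = 1 + τ / ν`, the rest of the kernel has mass
`τ ^ α ∑_{m ≥ 1} m ^ (α - 1) ρ ^ (-m) ≤ (1 / α + 1) ν ^ α`: split at `m ≈ ν / τ`, below which
`∑ m ^ (α - 1) ≤ (ν / τ) ^ α / α`, and above which the geometric tail is `≤ (ν / τ) ^ α`.
For `ν` small this is `≤ δ / 2`, and induction gives
`a n ≤ (2 b / δ) ρ ^ n ≤ (2 b / δ) e ^ (T₀ / ν)`.
-/

open Finset Real

theorem mul_rpow_sub_one_le_rpow_add_one_sub_rpow {p x : ℝ} (hp0 : 0 ≤ p) (hp1 : p ≤ 1)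
    (hx : 0 ≤ x) : p * (x + 1) ^ (p - 1) ≤ (x + 1) ^ p - x ^ p := by
  have hx1 : 0 < x + 1 := by linarith
  have bernoulli := rpow_one_add_le_one_add_mul_self (s := -(x + 1)⁻¹)
    (by simpa using inv_le_one_of_one_le₀ (by linarith : (1 : ℝ) ≤ x + 1)) hp0 hp1
  have hbase : 1 + -(x + 1)⁻¹ = x / (x + 1) := by field_simp; ring
  rw [hbase, div_rpow hx hx1.le, div_le_iff₀ (rpow_pos_of_pos hx1 p)] at bernoulli
  rw [rpow_sub_one hx1.ne']
  have hexpand : (1 + p * -(x + 1)⁻¹) * (x + 1) ^ p =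
      (x + 1) ^ p - p * ((x + 1) ^ p / (x + 1)) := by
    field_simp; ring
  linarith

theorem sum_range_rpow_sub_one_le {α : ℝ} (hα0 : 0 < α) (hα1 : α ≤ 1) (M : ℕ) :
    ∑ i ∈ range M, ((i : ℝ) + 1) ^ (α - 1) ≤ (M : ℝ) ^ α / α := by
  rw [le_div_iff₀ hα0, sum_mul]
  calc ∑ i ∈ range M, ((i : ℝ) + 1) ^ (α - 1) * α
      ≤ ∑ i ∈ range M, (((i + 1 : ℕ) : ℝ) ^ α - (i : ℝ) ^ α) := by
        gcongr with i
        push_cast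
        linarith [mul_rpow_sub_one_le_rpow_add_one_sub_rpow hα0.le hα1 (Nat.cast_nonneg' i)]
    _ = (M : ℝ) ^ α := by
        rw [sum_range_sub (fun i : ℕ => (i : ℝ) ^ α)]
        simp [zero_rpow hα0.ne']

theorem sum_range_ite_rpow_sub_one_le {α y : ℝ} (hα0 : 0 < α) (hα1 : α ≤ 1) (hy : 0 ≤ y)
    (n : ℕ) :
    ∑ i ∈ range n, (if (i : ℝ) + 1 ≤ y then ((i : ℝ) + 1) ^ (α - 1) else 0) ≤ y ^ α / α := by
  rw [← sum_filter]
  calc ∑ i ∈ range n with ((i : ℕ) : ℝ) + 1 ≤ y, ((i : ℝ) + 1) ^ (α - 1)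
      ≤ ∑ i ∈ range ⌊y⌋₊, ((i : ℝ) + 1) ^ (α - 1) := by
        refine sum_le_sum_of_subset_of_nonneg (fun i hi => ?_) (fun i _ _ => by positivity)
        rw [mem_filter] at hi
        rw [mem_range, Nat.lt_iff_add_one_le]
        exact Nat.le_floor (by exact_mod_cast hi.2)
    _ ≤ (⌊y⌋₊ : ℝ) ^ α / α := sum_range_rpow_sub_one_le hα0 hα1 _
    _ ≤ y ^ α / α := by gcongr; exact Nat.floor_le hy

theorem sum_range_rpow_sub_one_mul_pow_le {α r : ℝ} (hα0 : 0 < α) (hα1 : α ≤ 1) (hr0 : 0 < r)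
    (hr1 : r < 1) (n : ℕ) :
    ∑ i ∈ range n, ((i : ℝ) + 1) ^ (α - 1) * r ^ (i + 1) ≤ (1 / α + 1) * (r / (1 - r)) ^ α := by
  set y := r / (1 - r)
  have hy0 : 0 < y := div_pos hr0 (by linarith)
  have hsplit : ∀ i : ℕ, ((i : ℝ) + 1) ^ (α - 1) * r ^ (i + 1) ≤
      (if (i : ℝ) + 1 ≤ y then ((i : ℝ) + 1) ^ (α - 1) else 0) + y ^ (α - 1) * r ^ (i + 1) := by
    intro i
    split_ifs with hi
    · have : r ^ (i + 1) ≤ 1 := pow_le_one₀ hr0.le hr1.le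
      nlinarith [rpow_nonneg (by positivity : (0 : ℝ) ≤ (i : ℝ) + 1) (α - 1),
        rpow_nonneg hy0.le (α - 1), pow_nonneg hr0.le (i + 1)]
    · rw [zero_add]
      exact mul_le_mul_of_nonneg_right
        (rpow_le_rpow_of_nonpos hy0 (not_le.mp hi).le (by linarith)) (by positivity)
  have hgeom : ∑ i ∈ range n, r ^ (i + 1) ≤ y := by
    simpa [sum_Ico_eq_sum_range, add_comm] using
      geom_sum_Ico_le_of_lt_one (m := 1) (n := n + 1) hr0.le hr1
  calc ∑ i ∈ range n, ((i : ℝ) + 1) ^ (α - 1) * r ^ (i + 1)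
      ≤ y ^ α / α + y ^ (α - 1) * y := by
        refine (sum_le_sum fun i _ => hsplit i).trans ?_
        rw [sum_add_distrib, ← mul_sum]
        gcongr
        exact sum_range_ite_rpow_sub_one_le hα0 hα1 hy0.le n
    _ = (1 / α + 1) * y ^ α := by
        rw [rpow_sub_one hy0.ne', div_mul_cancel₀ _ hy0.ne']; ring

theorem le_mul_pow_of_le_add_sum_mul {a k : ℕ → ℝ} {b δ ρ : ℝ} {N : ℕ} (hδ : 0 < δ)
    (hb : 0 ≤ b) (hρ : 1 ≤ ρ) (ha : ∀ n, 0 ≤ a n) (hk : ∀ m, 0 ≤ k m) (hk0 : k 0 ≤ 1 - δ)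
    (hkρ : ∀ n, ∑ i ∈ range n, k (i + 1) * ρ⁻¹ ^ (i + 1) ≤ δ / 2)
    (h : ∀ n ≤ N, a n ≤ b + ∑ j ∈ range (n + 1), k (n - j) * a j) :
    ∀ n ≤ N, a n ≤ 2 * b / δ * ρ ^ n := by
  intro n
  induction n using Nat.strong_induction_on with
  | _ n ih =>
    intro hn
    have hpast : ∑ j ∈ range n, k (n - j) * a j ≤ b * ρ ^ n :=
      calc ∑ j ∈ range n, k (n - j) * a j
          ≤ ∑ j ∈ range n, k (n - j) * (2 * b / δ * ρ ^ j) := by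
            gcongr with j hj
            · exact hk _
            · exact ih j (mem_range.mp hj) ((mem_range.mp hj).le.trans hn)
        _ = 2 * b / δ * ρ ^ n * ∑ i ∈ range n, k (i + 1) * ρ⁻¹ ^ (i + 1) := by
            rw [mul_sum, ← sum_range_reflect]
            refine sum_congr rfl fun i hi => ?_
            have hi : i < n := mem_range.mp hi
            have hsplit : ρ ^ n = ρ ^ (n - 1 - i) * ρ ^ (i + 1) := by
              rw [← pow_add]; congr 1; omega
            rw [show n - (n - 1 - i) = i + 1 by omega, hsplit, inv_pow]
            field_simp
        _ ≤ 2 * b / δ * ρ ^ n * (δ / 2) := by gcongr; exact hkρ n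
        _ = b * ρ ^ n := by field_simp
    have hrec := h n hn
    rw [sum_range_succ, Nat.sub_self] at hrec
    have hρn : 1 ≤ ρ ^ n := one_le_pow₀ hρ
    rw [div_mul_eq_mul_div, le_div_iff₀ hδ]
    nlinarith [ha n]

theorem Antitone.exists_pos_forall_le_sub_of_lt {q : ℕ → ℝ} (hq : Antitone q) (c : ℝ) :
    ∃ δ > 0, ∀ n, q n < c → q n ≤ c - δ := by
  classical
  by_cases h : ∃ n, q n < c
  · exact ⟨c - q (Nat.find h), by linarith [Nat.find_spec h],
      fun n hn => by linarith [hq (Nat.find_min' h hn)]⟩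
  · exact ⟨1, one_pos, fun n hn => absurd ⟨n, hn⟩ h⟩

theorem exists_pos_mul_rpow_le {c ε α : ℝ} (hc : 0 ≤ c) (hε : 0 < ε) (hα : 0 < α) :
    ∃ ν > 0, c * ν ^ α ≤ ε := by
  refine ⟨(ε / (c + 1)) ^ α⁻¹, by positivity, ?_⟩
  rw [rpow_inv_rpow (by positivity) hα.ne', mul_div_assoc', div_le_iff₀ (by positivity)]
  nlinarith

theorem sum_singular_kernel_mul_inv_pow_le {α τ ν : ℝ} (hα0 : 0 < α) (hα1 : α ≤ 1)
    (hτ : 0 < τ) (hν : 0 < ν) (n : ℕ) :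
    τ * ∑ i ∈ range n, (((i + 1 + 1 : ℕ) : ℝ) * τ) ^ (α - 1) * (1 + τ / ν)⁻¹ ^ (i + 1)
      ≤ (1 / α + 1) * ν ^ α := by
  set r := (1 + τ / ν)⁻¹ with hr
  have hr0 : 0 < r := by positivity
  have hr1 : r < 1 := inv_lt_one_of_one_lt₀ (by simp [hτ, hν])
  have hgap : r / (1 - r) = ν / τ := by
    rw [hr]; field_simp; simp [hτ.ne']
  calc τ * ∑ i ∈ range n, (((i + 1 + 1 : ℕ) : ℝ) * τ) ^ (α - 1) * r ^ (i + 1)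
      ≤ τ * ∑ i ∈ range n, τ ^ (α - 1) * (((i : ℝ) + 1) ^ (α - 1) * r ^ (i + 1)) := by
        refine mul_le_mul_of_nonneg_left (sum_le_sum fun i _ => ?_) hτ.le
        rw [← mul_assoc, ← mul_rpow hτ.le (by positivity), mul_comm τ]
        refine mul_le_mul_of_nonneg_right
          (rpow_le_rpow_of_nonpos (by positivity) ?_ (by linarith)) (by positivity)
        push_cast
        gcongr
        linarith
    _ = τ ^ α * ∑ i ∈ range n, ((i : ℝ) + 1) ^ (α - 1) * r ^ (i + 1) := by
        rw [← mul_sum, ← mul_assoc, rpow_sub_one hτ.ne', mul_div_cancel₀ _ hτ.ne']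
    _ ≤ τ ^ α * ((1 / α + 1) * (r / (1 - r)) ^ α) := by
        gcongr
        exact sum_range_rpow_sub_one_mul_pow_le hα0 hα1 hr0 hr1 n
    _ = (1 / α + 1) * ν ^ α := by
        rw [hgap, mul_left_comm, ← mul_rpow hτ.le (by positivity), mul_div_cancel₀ _ hτ.ne']

theorem one_add_pow_le_exp_mul {x : ℝ} (hx : 0 ≤ x) {n N : ℕ} (hn : n ≤ N) :
    (1 + x) ^ n ≤ exp (N * x) :=
  calc (1 + x) ^ n ≤ (1 + x) ^ N := pow_le_pow_right₀ (by linarith) hn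
    _ ≤ exp x ^ N := by gcongr; linarith [add_one_le_exp x]
    _ = exp (N * x) := (exp_nat_mul x N).symm

/-- Discrete Gronwall inequality with weakly singular kernel. -/
theorem discrete_singular_gronwall (α K T₀ : ℝ) (hα : α ∈ Set.Ioo (0:ℝ) 1)
    (hK : 0 ≤ K) (hT₀ : 0 < T₀) :
    ∃ C : ℝ, ∀ (N : ℕ) (τ b : ℝ) (a : ℕ → ℝ),
      0 < τ → (N : ℝ) * τ = T₀ → 0 ≤ b → K * τ ^ α < 1 →
      (∀ n, 0 ≤ a n) →
      (∀ n ≤ N, a n ≤ b + K * τ *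
        ∑ j ∈ Finset.range (n + 1), (((n - j + 1 : ℕ) : ℝ) * τ) ^ (α - 1) * a j) →
      ∀ n ≤ N, a n ≤ C * b := by
  obtain ⟨hα0, hα1⟩ := hα
  obtain ⟨δ, hδ, hgap⟩ := Antitone.exists_pos_forall_le_sub_of_lt
    (q := fun N : ℕ => K * (T₀ / ((N : ℝ) + 1)) ^ α) (fun m n hmn => by dsimp only; gcongr) 1
  obtain ⟨ν, hν, hνK⟩ := exists_pos_mul_rpow_le (c := K * (1 / α + 1)) (by positivity)
    (half_pos hδ) hα0
  refine ⟨2 / δ * exp (T₀ / ν), fun N τ b a hτ hNτ hb hKτ ha hrec n hn => ?_⟩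
  obtain ⟨M, rfl⟩ : ∃ M, N = M + 1 :=
    Nat.exists_eq_succ_of_ne_zero (by rintro rfl; simp at hNτ; linarith)
  have hτT : τ = T₀ / ((M : ℝ) + 1) := by push_cast at hNτ; field_simp; linarith
  have hτα : τ * τ ^ (α - 1) = τ ^ α := by rw [rpow_sub_one hτ.ne', mul_div_cancel₀ _ hτ.ne']
  have hdiag : K * τ ^ α ≤ 1 - δ := by
    rw [hτT] at hKτ ⊢; exact hgap M hKτ
  have hρ : 1 ≤ 1 + τ / ν := le_add_of_nonneg_right (by positivity)
  have hbound := le_mul_pow_of_le_add_sum_mul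
    (k := fun m => K * τ * (((m + 1 : ℕ) : ℝ) * τ) ^ (α - 1)) hδ hb hρ ha
    (fun m => by positivity)
    (by simpa [mul_assoc, hτα] using hdiag)
    (fun m => calc
      _ = K * (τ * ∑ i ∈ range m,
            (((i + 1 + 1 : ℕ) : ℝ) * τ) ^ (α - 1) * (1 + τ / ν)⁻¹ ^ (i + 1)) := by
        simp only [mul_sum, mul_assoc]
      _ ≤ K * ((1 / α + 1) * ν ^ α) :=
        mul_le_mul_of_nonneg_left (sum_singular_kernel_mul_inv_pow_le hα0 hα1.le hτ hν m) hK
      _ ≤ δ / 2 := by rw [← mul_assoc]; exact hνK)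
    (fun n hn => by simpa only [mul_sum, mul_assoc] using hrec n hn) n hn
  calc a n ≤ 2 * b / δ * (1 + τ / ν) ^ n := hbound
    _ ≤ 2 * b / δ * exp (T₀ / ν) := by
        gcongr
        exact (one_add_pow_le_exp_mul (by positivity) hn).trans_eq (by rw [← hNτ, mul_div_assoc])
    _ = 2 / δ * exp (T₀ / ν) * b := by ring
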